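/- arXiv:0810.1532 — 7 statements merged into one kernel-verified Lean document; each statement's English description precedes it below -/
import Mathlib

section
/- Let Ψ ⊆ R be extremal (with respect to a vector ξ whose maximal pairing M with R is positive). Suppose m : R → ℕ and n : Ψ → ℕ satisfy ∑_{α∈R} m(α)·α = ∑_{β∈Ψ} n(β)·β in E. Then ∑_{β∈Ψ} n(β) ≤ ∑_{α∈R} m(α), with equality if and only if m(α) = 0 for every α ∈ R \ Ψ. -/
/-! Pair both sides with `ξ`: the right side becomes `M * ∑ n`, while each term `m α * ⟪ξ, α⟫`
on the left is at most `m α * M`, with equality exactly when `m α = 0` or `α ∈ Ψ`. -/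

open RealInnerProductSpace Finset

section WeightedSum

variable {ι : Type*} {s : Finset ι} {w f : ι → ℝ} {M : ℝ}

theorem sum_mul_le_bound_mul_sum (hw : ∀ i ∈ s, 0 ≤ w i) (hf : ∀ i ∈ s, f i ≤ M) :
    ∑ i ∈ s, w i * f i ≤ M * ∑ i ∈ s, w i := by
  rw [mul_sum]
  exact sum_le_sum fun i hi => by
    rw [mul_comm M]
    exact mul_le_mul_of_nonneg_left (hf i hi) (hw i hi)

theorem sum_mul_eq_bound_mul_sum_iff (hw : ∀ i ∈ s, 0 ≤ w i) (hf : ∀ i ∈ s, f i ≤ M) :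
    ∑ i ∈ s, w i * f i = M * ∑ i ∈ s, w i ↔ ∀ i ∈ s, f i ≠ M → w i = 0 := by
  simp_rw [mul_sum, mul_comm M]
  rw [sum_eq_sum_iff_of_le fun i hi => mul_le_mul_of_nonneg_left (hf i hi) (hw i hi)]
  refine forall₂_congr fun i _ => ?_
  rw [mul_eq_mul_left_iff, or_iff_not_imp_left]

end WeightedSum

theorem stmt_0_general {E : Type*} [NormedAddCommGroup E] [InnerProductSpace ℝ E]
    (R : Finset E)
    (ξ : E) (M : ℝ) (hM : IsGreatest ((fun β => ⟪ξ, β⟫) '' (R : Set E)) M) (hMpos : 0 < M)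
    (Ψ : Finset E) (hΨ : ∀ α, α ∈ Ψ ↔ α ∈ R ∧ ⟪ξ, α⟫ = M)
    (m n : E → ℕ)
    (hsum : ∑ α ∈ R, (m α : ℝ) • α = ∑ β ∈ Ψ, (n β : ℝ) • β) :
    (∑ β ∈ Ψ, n β) ≤ (∑ α ∈ R, m α) ∧
      ((∑ β ∈ Ψ, n β) = (∑ α ∈ R, m α) ↔ ∀ α ∈ R, α ∉ Ψ → m α = 0) := by
  have hle : ∀ α ∈ R, ⟪ξ, α⟫ ≤ M := fun α hα => hM.2 ⟨α, hα, rfl⟩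
  have hw : ∀ α ∈ R, (0 : ℝ) ≤ m α := fun _ _ => Nat.cast_nonneg _
  have pairing : ∑ α ∈ R, (m α : ℝ) * ⟪ξ, α⟫ = M * ∑ β ∈ Ψ, (n β : ℝ) := by
    have := congrArg (⟪ξ, ·⟫) hsum
    simp only [inner_sum, real_inner_smul_right] at this
    rw [this, mul_sum]
    exact sum_congr rfl fun β hβ => by rw [((hΨ β).1 hβ).2, mul_comm]
  constructor
  · have := pairing ▸ sum_mul_le_bound_mul_sum hw hle
    exact_mod_cast le_of_mul_le_mul_left this hMpos
  · rw [← (Nat.cast_injective (R := ℝ)).eq_iff, ← (mul_right_injective₀ hMpos.ne').eq_iff]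
    push_cast
    rw [← pairing, sum_mul_eq_bound_mul_sum_iff hw hle]
    exact forall₂_congr fun α hα => by simp [hΨ, hα]

/-- Let `Ψ ⊆ R` be extremal (w.r.t. `ξ` whose maximal pairing `M` with `R` is
positive).  If `∑_{α ∈ R} m α • α = ∑_{β ∈ Ψ} n β • β` then `∑_{β ∈ Ψ} n β ≤ ∑_{α ∈ R} m α`,
with equality iff `m` vanishes on `R \ Ψ`. -/
theorem stmt_0 {E : Type*} [NormedAddCommGroup E] [InnerProductSpace ℝ E]
    (R : Finset E) (hRne : R.Nonempty) (hRsym : ∀ α ∈ R, -α ∈ R) (hR0 : (0 : E) ∉ R)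
    (ξ : E) (M : ℝ) (hM : IsGreatest ((fun β => ⟪ξ, β⟫) '' (R : Set E)) M) (hMpos : 0 < M)
    (Ψ : Finset E) (hΨ : ∀ α, α ∈ Ψ ↔ α ∈ R ∧ ⟪ξ, α⟫ = M)
    (m n : E → ℕ)
    (hsum : ∑ α ∈ R, (m α : ℝ) • α = ∑ β ∈ Ψ, (n β : ℝ) • β) :
    (∑ β ∈ Ψ, n β) ≤ (∑ α ∈ R, m α) ∧
      ((∑ β ∈ Ψ, n β) = (∑ α ∈ R, m α) ↔ ∀ α ∈ R, α ∉ Ψ → m α = 0) :=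
  stmt_0_general R ξ M hM hMpos Ψ hΨ m n hsum
end

section
/- For all r, s ≥ 1, all finite m ∈ ℕ^r and n ∈ ℕ^s and all a ∈ ℤ, the map (x, y) ↦ (m − x, n − y) is an isomorphism of quivers from Γ_a(m,n) onto the opposite quiver of Γ_{|m|−|n|−a}(m,n), where |m| and |n| denote the sums of the coordinates of m and n. -/
/-- Vertices of the quiver `Γ_a(m, n)` for finite bounds `m ∈ ℕ^r`, `n ∈ ℕ^s`. -/
def gammaVert {r s : ℕ} (m : Fin r → ℕ) (n : Fin s → ℕ) (a : ℤ)
    (p : (Fin r → ℕ) × (Fin s → ℕ)) : Prop :=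
  (∀ i, p.1 i ≤ m i) ∧ (∀ j, p.2 j ≤ n j) ∧
    (∑ i, (p.1 i : ℤ)) = (∑ j, (p.2 j : ℤ)) + a

/-- Arrows of `Γ_a(m, n)` : there is an arrow `(x, y) ← (x + e_i, y + e_j)`. -/
def gammaArrow {r s : ℕ} (p q : (Fin r → ℕ) × (Fin s → ℕ)) : Prop :=
  ∃ (i : Fin r) (j : Fin s), q.1 = p.1 + Pi.single i 1 ∧ q.2 = p.2 + Pi.single j 1

/-!
The map is `p ↦ (m, n) - p` in the canonically ordered monoid `(Fin r → ℕ) × (Fin s → ℕ)`.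
On points below `(m, n)` it is an involution, it negates the weight `|x| - |y|` up to the
shift `|m| - |n|`, and it reverses every arrow, since `q = p + e` is equivalent to
`(m, n) - p = ((m, n) - q) + e`.
-/

section CanonicallyOrdered

variable {α : Type*} [AddCommMonoid α] [PartialOrder α] [CanonicallyOrderedAdd α] [Sub α]
  [OrderedSub α] [AddLeftReflectLE α] {M p q e : α}

theorem tsub_eq_tsub_add_of_eq_add (hq : q ≤ M) (h : q = p + e) : M - p = M - q + e := by
  have he : e ≤ M - p := le_tsub_of_add_le_left (h ▸ hq)
  rw [h, tsub_add_eq_tsub_tsub, tsub_add_cancel_of_le he]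

theorem tsub_eq_tsub_add_iff (hp : p ≤ M) (hq : q ≤ M) : M - p = M - q + e ↔ q = p + e := by
  refine ⟨fun h => ?_, tsub_eq_tsub_add_of_eq_add hq⟩
  simpa only [tsub_tsub_cancel_of_le hp, tsub_tsub_cancel_of_le hq] using
    tsub_eq_tsub_add_of_eq_add (M := M) tsub_le_self h

end CanonicallyOrdered

theorem Finset.cast_sum_tsub {ι : Type*} [Fintype ι] {m x : ι → ℕ} (hx : x ≤ m) :
    ∑ i, (((m - x) i : ℕ) : ℤ) = ∑ i, (m i : ℤ) - ∑ i, (x i : ℤ) := by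
  simp only [Pi.sub_apply, Nat.cast_sub (hx _), Finset.sum_sub_distrib]

section Gamma

variable {r s : ℕ} {m : Fin r → ℕ} {n : Fin s → ℕ} {a : ℤ} {p q : (Fin r → ℕ) × (Fin s → ℕ)}

theorem gammaVert.le (hp : gammaVert m n a p) : p ≤ (m, n) :=
  ⟨hp.1, hp.2.1⟩

theorem gammaVert.tsub (hp : gammaVert m n a p) :
    gammaVert m n ((∑ i, (m i : ℤ)) - (∑ j, (n j : ℤ)) - a) ((m, n) - p) := by
  obtain ⟨hx, hy, hsum⟩ := hp
  refine ⟨fun _ => tsub_le_self, fun _ => tsub_le_self, ?_⟩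
  rw [Prod.fst_sub, Prod.snd_sub, Finset.cast_sum_tsub hx, Finset.cast_sum_tsub hy]
  linarith

theorem gammaArrow_iff : gammaArrow p q ↔ ∃ i j, q = p + (Pi.single i 1, Pi.single j 1) := by
  simp only [gammaArrow, Prod.ext_iff, Prod.fst_add, Prod.snd_add]

theorem gammaArrow_tsub_iff (hp : p ≤ (m, n)) (hq : q ≤ (m, n)) :
    gammaArrow ((m, n) - q) ((m, n) - p) ↔ gammaArrow p q := by
  simp only [gammaArrow_iff, tsub_eq_tsub_add_iff hp hq]

end Gamma

theorem stmt_4_general (r s : ℕ)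
    (m : Fin r → ℕ) (n : Fin s → ℕ) (a : ℤ)
    (b : ℤ) (hb : b = (∑ i, (m i : ℤ)) - (∑ j, (n j : ℤ)) - a)
    (F : (Fin r → ℕ) × (Fin s → ℕ) → (Fin r → ℕ) × (Fin s → ℕ))
    (hF : ∀ p, F p = (fun i => m i - p.1 i, fun j => n j - p.2 j)) :
    (∀ p, gammaVert m n a p → gammaVert m n b (F p)) ∧
      (∀ p q, gammaVert m n a p → gammaVert m n a q → F p = F q → p = q) ∧
      (∀ q, gammaVert m n b q → ∃ p, gammaVert m n a p ∧ F p = q) ∧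
      (∀ p q, gammaVert m n a p → gammaVert m n a q →
        (gammaArrow p q ↔ gammaArrow (F q) (F p))) := by
  obtain rfl : F = ((m, n) - ·) := funext hF
  have hab : a = (∑ i, (m i : ℤ)) - (∑ j, (n j : ℤ)) - b := by rw [hb]; ring
  subst hb
  refine ⟨fun p hp => hp.tsub, fun p q hp hq => (tsub_right_inj hp.le hq.le).1,
    fun q hq => ⟨(m, n) - q, hab ▸ hq.tsub, tsub_tsub_cancel_of_le hq.le⟩,
    fun p q hp hq => (gammaArrow_tsub_iff hp.le hq.le).symm⟩

/-- the map `(x, y) ↦ (m − x, n − y)` is an isomorphism of quivers from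
`Γ_a(m, n)` onto the opposite quiver of `Γ_{|m| − |n| − a}(m, n)` : it maps vertices of the
former bijectively onto vertices of the latter, and `(p, q)` is an arrow iff `(F q, F p)` is. -/
theorem stmt_4 (r s : ℕ) (hr : 1 ≤ r) (hs : 1 ≤ s)
    (m : Fin r → ℕ) (n : Fin s → ℕ) (a : ℤ)
    (b : ℤ) (hb : b = (∑ i, (m i : ℤ)) - (∑ j, (n j : ℤ)) - a)
    (F : (Fin r → ℕ) × (Fin s → ℕ) → (Fin r → ℕ) × (Fin s → ℕ))
    (hF : ∀ p, F p = (fun i => m i - p.1 i, fun j => n j - p.2 j)) :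
    (∀ p, gammaVert m n a p → gammaVert m n b (F p)) ∧
      (∀ p q, gammaVert m n a p → gammaVert m n a q → F p = F q → p = q) ∧
      (∀ q, gammaVert m n b q → ∃ p, gammaVert m n a p ∧ F p = q) ∧
      (∀ p q, gammaVert m n a p → gammaVert m n a q →
        (gammaArrow p q ↔ gammaArrow (F q) (F p))) :=
  stmt_4_general r s m n a b hb F hF
end

section
/- Let r ≥ 2 and let m ∈ ℤ_{>0}^r have all entries positive. Then the quiver Ξ_0(m) is connected, and Ξ_1(m) is connected unless r = 2 and m = (1,1), in which case Ξ_1(m) consists of two vertices and no arrows. (Connected means: any two vertices are joined by a finite chain of vertices in which consecutive vertices are connected by an arrow in one direction or the other.) -/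
/-!
A vertex `x` of `Ξ_a(m)` with `|x| ≥ 2` dominates some `e_i + e_j` (possibly `i = j`), so
`x - e_i - e_j` is a vertex of `Ξ_a(m)` with an arrow into `x`. Descending along such arrows
connects every vertex of `Ξ_a(m)` to one with `|x| < 2`: to `0` if `a = 0`, to some `e_i` if
`a = 1`. Both `e_i` and `e_j` have an arrow into `e_i + e_j + e_k` as soon as this lies below `m`;
a third index `k`, or an index with `m_k ≥ 2`, provides such a `k` unless `r = 2` and
`m = (1,1)`. In that last case arrows raise `|x|` by `2` while `|m| = 2`, so no arrow joins two
odd vertices.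
-/

/-- Vertices of `Ξ_a(m)` : points `x ∈ ℕ^r` with `x ≤ m` coordinatewise and `|x| ≡ a (mod 2)`. -/
def xiVert {r : ℕ} (m : Fin r → ℕ) (a : ℕ) (x : Fin r → ℕ) : Prop :=
  (∀ i, x i ≤ m i) ∧ (∑ i, x i) % 2 = a

/-- Arrows of `Ξ(m)` : `x ← x + 2e_j` when `x j + 2 ≤ m j`, and `x ← x + e_i + e_j` when
`i < j`, `x i + 1 ≤ m i` and `x j + 1 ≤ m j`. -/
def xiArrow {r : ℕ} (m : Fin r → ℕ) (x y : Fin r → ℕ) : Prop :=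
  (∃ j, x j + 2 ≤ m j ∧ y = x + Pi.single j 2) ∨
    (∃ i j, i < j ∧ x i + 1 ≤ m i ∧ x j + 1 ≤ m j ∧ y = x + Pi.single i 1 + Pi.single j 1)

open Finset Relation

section SumOfNat

variable {ι : Type*} [Fintype ι] [DecidableEq ι] {x : ι → ℕ}

lemma exists_single_le_of_sum_pos (h : 0 < ∑ i, x i) : ∃ i, Pi.single i 1 ≤ x := by
  obtain ⟨i, -, hi⟩ := exists_ne_zero_of_sum_ne_zero h.ne'
  refine ⟨i, fun k => ?_⟩
  rcases eq_or_ne k i with rfl | hk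
  · simpa [Nat.one_le_iff_ne_zero] using hi
  · simp [hk]

lemma exists_single_add_single_le (h : 2 ≤ ∑ i, x i) :
    ∃ i j, Pi.single i 1 + Pi.single j 1 ≤ x := by
  obtain ⟨i, hi⟩ := exists_single_le_of_sum_pos (by omega : 0 < ∑ i, x i)
  have hpos : 0 < ∑ k, (x - Pi.single i 1 : ι → ℕ) k := by
    rw [Pi.sub_def, Finset.sum_tsub_distrib _ fun k _ => hi k]
    simp only [sum_pi_single', mem_univ, ↓reduceIte, tsub_pos_iff_lt]
    omega
  obtain ⟨j, hj⟩ := exists_single_le_of_sum_pos hpos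
  exact ⟨i, j, (le_tsub_iff_left hi).mp hj⟩

lemma exists_eq_single_of_sum_eq_one (h : ∑ i, x i = 1) : ∃ i, x = Pi.single i 1 := by
  obtain ⟨i, hi⟩ := exists_single_le_of_sum_pos (h ▸ Nat.one_pos)
  have hsum : ∑ k, (x - Pi.single i 1 : ι → ℕ) k = 0 := by
    rw [Pi.sub_def, Finset.sum_tsub_distrib _ fun k _ => hi k]
    simp [h]
  have hle : x ≤ Pi.single i 1 := tsub_eq_zero_iff_le.mp <|
    funext fun k => Finset.sum_eq_zero_iff.mp hsum k (mem_univ k)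
  exact ⟨i, le_antisymm hle hi⟩

end SumOfNat

variable {r : ℕ} {m x y : Fin r → ℕ} {a : ℕ}

lemma xiArrow.le (h : xiArrow m x y) : x ≤ y := by
  rcases h with ⟨j, -, rfl⟩ | ⟨i, j, -, -, -, rfl⟩
  · exact le_self_add
  · exact le_self_add.trans le_self_add

lemma xiArrow.sum_eq (h : xiArrow m x y) : ∑ i, y i = ∑ i, x i + 2 := by
  rcases h with ⟨j, -, rfl⟩ | ⟨i, j, -, -, -, rfl⟩ <;>
    simp [sum_add_distrib, add_assoc]

lemma xiVert.of_xiArrow (hy : xiVert m a y) (h : xiArrow m x y) : xiVert m a x :=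
  ⟨fun i => (h.le i).trans (hy.1 i), by have := hy.2; rw [h.sum_eq] at this; omega⟩

lemma xiArrow_add_single_add_single {i j : Fin r} (h : x + Pi.single i 1 + Pi.single j 1 ≤ m) :
    xiArrow m x (x + Pi.single i 1 + Pi.single j 1) := by
  have hi := h i
  have hj := h j
  rcases lt_trichotomy i j with hij | rfl | hij
  · simp only [Pi.add_apply, Pi.single_eq_same, Pi.single_eq_of_ne hij.ne,
      Pi.single_eq_of_ne hij.ne', add_zero] at hi hj
    exact Or.inr ⟨i, j, hij, hi, hj, rfl⟩
  · simp only [Pi.add_apply, Pi.single_eq_same] at hi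
    exact Or.inl ⟨i, by omega, by rw [add_assoc, ← Pi.single_add]⟩
  · simp only [Pi.add_apply, Pi.single_eq_same, Pi.single_eq_of_ne hij.ne,
      Pi.single_eq_of_ne hij.ne', add_zero] at hi hj
    exact Or.inr ⟨j, i, hij, hj, hi, add_right_comm _ _ _⟩

lemma exists_xiArrow_of_two_le_sum (hx : x ≤ m) (h : 2 ≤ ∑ i, x i) : ∃ y, xiArrow m y x := by
  obtain ⟨i, j, hij⟩ := exists_single_add_single_le h
  have hx' : x - (Pi.single i 1 + Pi.single j 1) + Pi.single i 1 + Pi.single j 1 = x := by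
    rw [add_assoc]; exact tsub_add_cancel_of_le hij
  exact ⟨_, hx' ▸ xiArrow_add_single_add_single (hx' ▸ hx)⟩

/-- `ReflTransGen (SymmGen (XiArrowOn m a))` is, by unfolding, connectivity in `Ξ_a(m)`. -/
def XiArrowOn (m : Fin r → ℕ) (a : ℕ) (u v : {x : Fin r → ℕ // xiVert m a x}) : Prop :=
  xiArrow m u.1 v.1

lemma exists_reflTransGen_sum_lt_two (p : {x : Fin r → ℕ // xiVert m a x}) :
    ∃ q : {x : Fin r → ℕ // xiVert m a x},
      ∑ i, q.1 i < 2 ∧ ReflTransGen (SymmGen (XiArrowOn m a)) p q := by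
  induction hn : ∑ i, p.1 i using Nat.strong_induction_on generalizing p with
  | _ n ih =>
    by_cases h2 : 2 ≤ n
    · obtain ⟨y, hy⟩ := exists_xiArrow_of_two_le_sum p.2.1 (hn ▸ h2)
      have hyp : XiArrowOn m a ⟨y, p.2.of_xiArrow hy⟩ p := hy
      have hlt : ∑ i, y i < n := by have := hy.sum_eq; omega
      obtain ⟨q, hq, hyq⟩ := ih _ hlt ⟨y, p.2.of_xiArrow hy⟩ rfl
      exact ⟨q, hq, .head (.of_rel_symm hyp) hyq⟩
    · exact ⟨p, by omega, .refl⟩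

lemma xiVert_single {i : Fin r} (hi : 1 ≤ m i) : xiVert m 1 (Pi.single i 1) :=
  ⟨fun k => by rcases eq_or_ne k i with rfl | hk <;> simp [*], by simp⟩

lemma reflTransGen_single_single_of_le {i j k : Fin r}
    (hijk : Pi.single i 1 + Pi.single j 1 + Pi.single k 1 ≤ m)
    (hi : xiVert m 1 (Pi.single i 1)) (hj : xiVert m 1 (Pi.single j 1)) :
    ReflTransGen (SymmGen (XiArrowOn m 1)) ⟨_, hi⟩ ⟨_, hj⟩ := by
  have hjik : Pi.single j 1 + Pi.single i 1 + Pi.single k 1 ≤ m := by rwa [add_comm (Pi.single j 1)]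
  have hz : xiVert m 1 (Pi.single i 1 + Pi.single j 1 + Pi.single k 1) :=
    ⟨hijk, by simp [sum_add_distrib]⟩
  have hiz : XiArrowOn m 1 ⟨_, hi⟩ ⟨_, hz⟩ := xiArrow_add_single_add_single hijk
  have hjz : XiArrowOn m 1 ⟨_, hj⟩ ⟨_, hz⟩ := by
    have := xiArrow_add_single_add_single hjik
    rwa [add_comm (Pi.single j 1)] at this
  exact .head (.of_rel hiz) (.single (.of_rel_symm hjz))

lemma exists_single_add_single_add_single_le (hm : ∀ i, 1 ≤ m i)
    (hm' : ¬(r = 2 ∧ ∀ i, m i = 1)) {i j : Fin r} (hij : i ≠ j) :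
    ∃ k, Pi.single i 1 + Pi.single j 1 + Pi.single k 1 ≤ m := by
  by_cases hk : ∃ k, k ≠ i ∧ k ≠ j
  · obtain ⟨k, hki, hkj⟩ := hk
    refine ⟨k, fun t => ?_⟩
    have := hm t
    simp only [Pi.add_apply, Pi.single_apply]
    split_ifs <;> subst_vars <;> omega
  · push Not at hk
    have hr : r = 2 := by
      have huniv : ({i, j} : Finset (Fin r)) = univ := eq_univ_of_forall fun k => by
        by_cases hki : k = i
        · simp [hki]
        · simp [hk k hki]
      simpa [card_pair hij] using (congrArg Finset.card huniv).symm
    obtain ⟨t, ht⟩ : ∃ t, 2 ≤ m t := by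
      by_contra! h
      exact hm' ⟨hr, fun k => by have := hm k; have := h k; omega⟩
    refine ⟨t, fun s => ?_⟩
    have hs := hm s
    have hti := hk t
    have hsi := hk s
    simp only [Pi.add_apply, Pi.single_apply]
    split_ifs <;> subst_vars <;> omega

lemma xiVert.eq_zero_of_sum_lt_two (hx : xiVert m 0 x) (h : ∑ i, x i < 2) : x = 0 := by
  have hx0 : ∑ i, x i = 0 := by have := hx.2; omega
  exact funext fun i => sum_eq_zero_iff.mp hx0 i (mem_univ i)

lemma xiVert.exists_eq_single_of_sum_lt_two (hx : xiVert m 1 x) (h : ∑ i, x i < 2) :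
    ∃ i, x = Pi.single i 1 :=
  exists_eq_single_of_sum_eq_one (by have := hx.2; omega)

lemma reflTransGen_single_single (hm : ∀ i, 1 ≤ m i) (hm' : ¬(r = 2 ∧ ∀ i, m i = 1))
    (i j : Fin r) (hi : xiVert m 1 (Pi.single i 1)) (hj : xiVert m 1 (Pi.single j 1)) :
    ReflTransGen (SymmGen (XiArrowOn m 1)) ⟨_, hi⟩ ⟨_, hj⟩ := by
  rcases eq_or_ne i j with rfl | hij
  · rfl
  · obtain ⟨k, hk⟩ := exists_single_add_single_add_single_le hm hm' hij
    exact reflTransGen_single_single_of_le hk hi hj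

lemma xiVert_one_iff_of_sum_lt_three (hm : ∑ i, m i < 3) :
    xiVert m 1 x ↔ ∃ i, 1 ≤ m i ∧ x = Pi.single i 1 := by
  refine ⟨fun hx => ?_, fun ⟨i, hi, hx⟩ => hx ▸ xiVert_single hi⟩
  have hxm : ∑ i, x i ≤ ∑ i, m i := sum_le_sum fun i _ => hx.1 i
  obtain ⟨i, rfl⟩ := exists_eq_single_of_sum_eq_one (x := x) (by have := hx.2; omega)
  exact ⟨i, by simpa using hx.1 i, rfl⟩

lemma not_xiArrow_of_sum_lt_three (hm : ∑ i, m i < 3) (hx : xiVert m 1 x) (hy : xiVert m 1 y) :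
    ¬xiArrow m x y := fun h => by
  have hym : ∑ i, y i ≤ ∑ i, m i := sum_le_sum fun i _ => hy.1 i
  have := h.sum_eq
  have := hx.2
  omega

/-- for `r ≥ 2` and `m` with positive entries, `Ξ_0(m)` is connected, and
`Ξ_1(m)` is connected unless `r = 2` and `m = (1,1)`, in which case `Ξ_1(m)` has exactly the
two vertices `e_1, e_2` and no arrows. -/
theorem stmt_6 (r : ℕ) (hr : 2 ≤ r) (m : Fin r → ℕ) (hm : ∀ i, 1 ≤ m i) :
    (∀ p q : {x : Fin r → ℕ // xiVert m 0 x},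
        Relation.ReflTransGen (fun u v => xiArrow m u.1 v.1 ∨ xiArrow m v.1 u.1) p q) ∧
      (¬(r = 2 ∧ ∀ i, m i = 1) →
        ∀ p q : {x : Fin r → ℕ // xiVert m 1 x},
          Relation.ReflTransGen (fun u v => xiArrow m u.1 v.1 ∨ xiArrow m v.1 u.1) p q) ∧
      ((r = 2 ∧ ∀ i, m i = 1) →
        (∀ x, xiVert m 1 x ↔
          (x = Pi.single (⟨0, by omega⟩ : Fin r) 1 ∨ x = Pi.single (⟨1, by omega⟩ : Fin r) 1)) ∧
        ∀ x y, xiVert m 1 x → xiVert m 1 y → ¬xiArrow m x y) := by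
  refine ⟨fun p q => ?_, fun hm' p q => ?_, ?_⟩
  · obtain ⟨⟨p₀, hp₀⟩, hp₀_lt, hp⟩ := exists_reflTransGen_sum_lt_two p
    obtain ⟨⟨q₀, hq₀⟩, hq₀_lt, hq⟩ := exists_reflTransGen_sum_lt_two q
    obtain rfl := hp₀.eq_zero_of_sum_lt_two hp₀_lt
    obtain rfl := hq₀.eq_zero_of_sum_lt_two hq₀_lt
    exact hp.trans (symm hq)
  · obtain ⟨⟨p₀, hp₀⟩, hp₀_lt, hp⟩ := exists_reflTransGen_sum_lt_two p
    obtain ⟨⟨q₀, hq₀⟩, hq₀_lt, hq⟩ := exists_reflTransGen_sum_lt_two q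
    obtain ⟨i, rfl⟩ := hp₀.exists_eq_single_of_sum_lt_two hp₀_lt
    obtain ⟨j, rfl⟩ := hq₀.exists_eq_single_of_sum_lt_two hq₀_lt
    exact hp.trans ((reflTransGen_single_single hm hm' i j hp₀ hq₀).trans (symm hq))
  · rintro ⟨rfl, hm1⟩
    have hsum : ∑ i, m i < 3 := by simp [hm1]
    refine ⟨fun x => ?_, fun x y hx hy => not_xiArrow_of_sum_lt_three hsum hx hy⟩
    simp [xiVert_one_iff_of_sum_lt_three hsum, Fin.exists_fin_two, hm1]
end

section
/- Let m ∈ ℤ_{>0}^r be a weakly decreasing tuple of positive integers with r ≥ 2. Then Ξ_0(m) is isomorphic to the opposite quiver of Ξ_1(m) if and only if |m| = m_1 + ⋯ + m_r is odd. -/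
section SingleLE

variable {ι M : Type*} [DecidableEq ι] [AddMonoid M] [PartialOrder M] [CanonicallyOrderedAdd M]

theorem Pi.single_le_iff {i : ι} {a : M} {f : ι → M} : Pi.single i a ≤ f ↔ a ≤ f i := by
  refine ⟨fun h => by simpa using h i, fun h t => ?_⟩
  by_cases hti : t = i
  · subst hti
    simpa using h
  · simp [Pi.single_eq_of_ne hti]

theorem Pi.single_add_single_le_iff {i j : ι} (hij : i ≠ j) {a b : M} {f : ι → M} :
    Pi.single i a + Pi.single j b ≤ f ↔ a ≤ f i ∧ b ≤ f j := by
  refine ⟨fun h => ⟨by simpa [hij] using h i, by simpa [hij.symm] using h j⟩,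
    fun ⟨hi, hj⟩ t => ?_⟩
  by_cases hti : t = i
  · subst hti
    simpa [hij] using hi
  · by_cases htj : t = j
    · subst htj
      simpa [hti] using hj
    · simp [hti, htj]

end SingleLE

namespace Xi

variable {r : ℕ} {m x y : Fin r → ℕ}

def IsStep (s : Fin r → ℕ) : Prop :=
  (∃ j, s = Pi.single j 2) ∨ ∃ i j, i < j ∧ s = Pi.single i 1 + Pi.single j 1

theorem IsStep.sum_eq {s : Fin r → ℕ} (hs : IsStep s) : ∑ i, s i = 2 := by
  rcases hs with ⟨j, rfl⟩ | ⟨i, j, -, rfl⟩ <;> simp [Finset.sum_add_distrib]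

theorem isStep_single_add_single {i j : Fin r} (hij : i ≠ j) :
    IsStep (Pi.single i 1 + Pi.single j 1 : Fin r → ℕ) := by
  rcases hij.lt_or_gt with h | h
  · exact Or.inr ⟨i, j, h, rfl⟩
  · exact Or.inr ⟨j, i, h, add_comm _ _⟩

theorem xiArrow_iff : xiArrow m x y ↔ ∃ s, IsStep s ∧ s ≤ m - x ∧ y = x + s := by
  constructor
  · rintro (⟨j, hj, rfl⟩ | ⟨i, j, hij, hi, hj, rfl⟩)
    · exact ⟨_, Or.inl ⟨j, rfl⟩, Pi.single_le_iff.2 (by simp only [Pi.sub_apply]; omega), rfl⟩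
    · refine ⟨_, Or.inr ⟨i, j, hij, rfl⟩, ?_, add_assoc _ _ _⟩
      exact (Pi.single_add_single_le_iff hij.ne).2 ⟨by simp only [Pi.sub_apply]; omega,
        by simp only [Pi.sub_apply]; omega⟩
  · rintro ⟨s, ⟨j, rfl⟩ | ⟨i, j, hij, rfl⟩, hs, rfl⟩
    · have hj := Pi.single_le_iff.1 hs
      simp only [Pi.sub_apply] at hj
      exact Or.inl ⟨j, by omega, rfl⟩
    · obtain ⟨hi, hj⟩ := (Pi.single_add_single_le_iff hij.ne).1 hs
      simp only [Pi.sub_apply] at hi hj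
      exact Or.inr ⟨i, j, hij, by omega, by omega, (add_assoc _ _ _).symm⟩

theorem xiArrow_tsub (h : xiArrow m x y) : xiArrow m (m - y) (m - x) := by
  obtain ⟨s, hs, hsx, rfl⟩ := xiArrow_iff.1 h
  have hm : m - (x + s) + s = m - x := by rw [← tsub_tsub, tsub_add_cancel_of_le hsx]
  exact xiArrow_iff.2 ⟨s, hs, le_tsub_of_add_le_left (hm.trans_le tsub_le_self), hm.symm⟩

theorem xiArrow_tsub_iff (hx : x ≤ m) (hy : y ≤ m) :
    xiArrow m (m - y) (m - x) ↔ xiArrow m x y := by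
  refine ⟨fun h => ?_, xiArrow_tsub⟩
  simpa only [tsub_tsub_cancel_of_le hx, tsub_tsub_cancel_of_le hy] using xiArrow_tsub h

theorem sum_tsub_add_sum (hx : x ≤ m) : ∑ i, (m - x) i + ∑ i, x i = ∑ i, m i := by
  rw [← Finset.sum_add_distrib]
  exact Finset.sum_congr rfl fun i _ => tsub_add_cancel_of_le (hx i)

theorem xiVert_tsub {a b : ℕ} (hx : xiVert m a x) (hb : b = (∑ i, m i + a) % 2) :
    xiVert m b (m - x) := by
  have := sum_tsub_add_sum hx.1
  have := hx.2
  exact ⟨fun i => tsub_le_self, by omega⟩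

def complEquiv (hm : (∑ i, m i) % 2 = 1) : {x // xiVert m 0 x} ≃ {x // xiVert m 1 x} where
  toFun x := ⟨m - x.1, xiVert_tsub x.2 (by omega)⟩
  invFun y := ⟨m - y.1, xiVert_tsub y.2 (by omega)⟩
  left_inv x := Subtype.ext (tsub_tsub_cancel_of_le x.2.1)
  right_inv y := Subtype.ext (tsub_tsub_cancel_of_le y.2.1)

theorem exists_isStep_le {u : Fin r → ℕ} (hu : (∑ i, u i) % 2 = 0) (hne : u ≠ 0) :
    ∃ s, IsStep s ∧ s ≤ u := by
  obtain ⟨j, hj⟩ : ∃ j, u j ≠ 0 := by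
    by_contra! h
    exact hne (funext h)
  by_cases h2 : 2 ≤ u j
  · exact ⟨_, Or.inl ⟨j, rfl⟩, Pi.single_le_iff.2 h2⟩
  obtain ⟨i, hij, hi⟩ : ∃ i, i ≠ j ∧ u i ≠ 0 := by
    by_contra! h
    have : ∑ i, u i = u j := Finset.sum_eq_single j (fun i _ hi => h i hi) (by simp)
    omega
  exact ⟨_, isStep_single_add_single hij,
    (Pi.single_add_single_le_iff hij).2 ⟨Nat.one_le_iff_ne_zero.2 hi, by omega⟩⟩

theorem eq_zero_of_forall_not_xiArrow {u : Fin r → ℕ} (hu : xiVert m 0 u)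
    (h : ∀ v, xiVert m 0 v → ¬ xiArrow m v u) : u = 0 := by
  by_contra hne
  obtain ⟨s, hs, hsu⟩ := exists_isStep_le hu.2 hne
  have hsum := sum_tsub_add_sum hsu
  have hv : xiVert m 0 (u - s) := ⟨fun i => tsub_le_self.trans (hu.1 i), by
    have := hs.sum_eq
    have := hu.2
    omega⟩
  have hus : u - s + s = u := tsub_add_cancel_of_le hsu
  exact h (u - s) hv (xiArrow_iff.2 ⟨s, hs, le_tsub_of_add_le_left (hus.trans_le hu.1), hus.symm⟩)

theorem not_xiArrow_tsub_single (k : Fin r) (w : Fin r → ℕ) :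
    ¬ xiArrow m (m - Pi.single k 1) w := by
  intro h
  obtain ⟨s, hs, hsk, -⟩ := xiArrow_iff.1 h
  have := Finset.sum_le_sum fun i (_ : i ∈ Finset.univ) => (hsk.trans tsub_tsub_le) i
  simp [hs.sum_eq] at this

theorem xiVert_tsub_single {k : Fin r} (hk : 1 ≤ m k) (hm : (∑ i, m i) % 2 = 0) :
    xiVert m 1 (m - Pi.single k 1) :=
  xiVert_tsub (a := 1) ⟨Pi.single_le_iff.2 hk, by simp⟩ (by omega)

end Xi

theorem stmt_8_general (r : ℕ) (hr : 2 ≤ r) (m : Fin r → ℕ) (hm : ∀ i, 1 ≤ m i) :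
    (∃ F : {x : Fin r → ℕ // xiVert m 0 x} ≃ {x : Fin r → ℕ // xiVert m 1 x},
        ∀ u v, xiArrow m u.1 v.1 ↔ xiArrow m (F v).1 (F u).1) ↔
      (∑ i, m i) % 2 = 1 := by
  refine ⟨fun ⟨F, hF⟩ => ?_, fun hodd =>
    ⟨Xi.complEquiv hodd, fun u v => (Xi.xiArrow_tsub_iff u.2.1 v.2.1).symm⟩⟩
  by_contra hodd
  have hsink (k : Fin r) :
      (F.symm ⟨m - Pi.single k 1, Xi.xiVert_tsub_single (hm k) (by omega)⟩).1 = 0 :=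
    Xi.eq_zero_of_forall_not_xiArrow (F.symm _).2 fun v hv hvu =>
      Xi.not_xiArrow_tsub_single k _ (by simpa using (hF ⟨v, hv⟩ _).1 hvu)
  have hcollapse (k l : Fin r) : m - Pi.single k 1 = m - Pi.single l 1 :=
    congrArg Subtype.val (F.symm.injective (Subtype.ext ((hsink k).trans (hsink l).symm)))
  have : Nontrivial (Fin r) := Fin.nontrivial_iff_two_le.2 hr
  obtain ⟨k, l, hkl⟩ := exists_pair_ne (Fin r)
  have hk := congrFun (hcollapse k l) k
  simp only [Pi.sub_apply, Pi.single_eq_same, Pi.single_eq_of_ne hkl, tsub_zero] at hk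
  have := hm k
  omega

/-- for a weakly decreasing positive tuple `m` of length `r ≥ 2`, the quiver
`Ξ_0(m)` is isomorphic to the opposite quiver of `Ξ_1(m)` if and only if `|m|` is odd. -/
theorem stmt_8 (r : ℕ) (hr : 2 ≤ r) (m : Fin r → ℕ) (hm : ∀ i, 1 ≤ m i)
    (hdec : ∀ i j : Fin r, i ≤ j → m j ≤ m i) :
    (∃ F : {x : Fin r → ℕ // xiVert m 0 x} ≃ {x : Fin r → ℕ // xiVert m 1 x},
        ∀ u v, xiArrow m u.1 v.1 ↔ xiArrow m (F v).1 (F u).1) ↔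
      (∑ i, m i) % 2 = 1 :=
  stmt_8_general r hr m hm
end

section
/- A subset Ψ ⊆ R^+ of the positive roots of type C_ℓ is extremal if and only if there exist k ≥ 1 and indices 1 ≤ i_1 < ⋯ < i_k ≤ ℓ such that Ψ = {ε_{i_r} + ε_{i_s} : 1 ≤ r ≤ s ≤ k} (where ε_i + ε_i = 2ε_i). In particular, no extremal subset of R^+ contains a root of the form ε_a − ε_b. -/
/-!
Let `m = max_a |ξ_a|`. Every root pairs with `ξ` to at most `2m`, and `±2ε_a` attains this at a
coordinate with `|ξ_a| = m`, so the face of `ξ` consists of the roots pairing to exactly `2m`.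
If it lies in `R⁺`, no coordinate equals `-m` (else `-2ε_a` would be in it), and then the roots
pairing to `2m` are exactly the `ε_a + ε_b` with `ξ_a = ξ_b = m`. Conversely the indicator
vector of `{i_1, …, i_k}` realizes the set of such sums. Roots `ε_a - ε_b` have coordinate sum
`0`, never `2`, so they do not occur.
-/

open RealInnerProductSpace

/-- The standard basis vector `ε_a` of `ℝ^ℓ`. -/
noncomputable def epsC (ℓ : ℕ) (a : Fin ℓ) : EuclideanSpace ℝ (Fin ℓ) :=
  EuclideanSpace.single a 1

/-- The root system of type `C_ℓ` : `{±ε_a ± ε_b : a < b} ∪ {±2ε_a}`. -/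
def RrootC (ℓ : ℕ) : Set (EuclideanSpace ℝ (Fin ℓ)) :=
  {v | (∃ a b : Fin ℓ, a < b ∧
        (v = epsC ℓ a + epsC ℓ b ∨ v = epsC ℓ a - epsC ℓ b ∨
          v = -epsC ℓ a + epsC ℓ b ∨ v = -epsC ℓ a - epsC ℓ b)) ∨
    ∃ a : Fin ℓ, v = (2 : ℝ) • epsC ℓ a ∨ v = -((2 : ℝ) • epsC ℓ a)}

/-- The positive roots of type `C_ℓ` :
`{ε_a − ε_b, ε_a + ε_b : a < b} ∪ {2ε_a}`. -/
def RposC (ℓ : ℕ) : Set (EuclideanSpace ℝ (Fin ℓ)) :=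
  {v | (∃ a b : Fin ℓ, a < b ∧ (v = epsC ℓ a - epsC ℓ b ∨ v = epsC ℓ a + epsC ℓ b)) ∨
    ∃ a : Fin ℓ, v = (2 : ℝ) • epsC ℓ a}

/-- `Ψ ⊆ R` is extremal if it is the set of roots on which the pairing with some `ξ` is
maximal among all roots. -/
def IsExtremalC (ℓ : ℕ) (Ψ : Set (EuclideanSpace ℝ (Fin ℓ))) : Prop :=
  ∃ ξ : EuclideanSpace ℝ (Fin ℓ),
    Ψ = {α | α ∈ RrootC ℓ ∧ ∀ β ∈ RrootC ℓ, ⟪ξ, β⟫ ≤ ⟪ξ, α⟫}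

lemma exists_fin_strictMono_range_eq {α : Type*} [LinearOrder α] {S : Set α} (hfin : S.Finite)
    (hne : S.Nonempty) : ∃ k, 1 ≤ k ∧ ∃ ii : Fin k → α, StrictMono ii ∧ Set.range ii = S :=
  ⟨_, Finset.card_pos.mpr (hfin.toFinset_nonempty.mpr hne), _,
    (hfin.toFinset.orderEmbOfFin rfl).strictMono,
    by rw [Finset.range_orderEmbOfFin, hfin.coe_toFinset]⟩

section RootsC

variable {ℓ : ℕ}

lemma inner_epsC (ξ : EuclideanSpace ℝ (Fin ℓ)) (a : Fin ℓ) : ⟪ξ, epsC ℓ a⟫ = ξ a := by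
  simp [epsC, EuclideanSpace.inner_single_right]

lemma two_smul_epsC_mem_RrootC (a : Fin ℓ) : (2 : ℝ) • epsC ℓ a ∈ RrootC ℓ :=
  Or.inr ⟨a, Or.inl rfl⟩

lemma neg_two_smul_epsC_mem_RrootC (a : Fin ℓ) : -((2 : ℝ) • epsC ℓ a) ∈ RrootC ℓ :=
  Or.inr ⟨a, Or.inr rfl⟩

lemma epsC_add_epsC_mem_RrootC {a b : Fin ℓ} (hab : a ≤ b) : epsC ℓ a + epsC ℓ b ∈ RrootC ℓ := by
  rcases hab.lt_or_eq with hab | rfl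
  · exact Or.inl ⟨a, b, hab, Or.inl rfl⟩
  · simpa only [two_smul] using two_smul_epsC_mem_RrootC a

/-- Positive roots pair positively with `ρ = (ℓ, ℓ - 1, …, 1)`. -/
lemma neg_two_smul_epsC_notMem_RposC (a : Fin ℓ) : -((2 : ℝ) • epsC ℓ a) ∉ RposC ℓ := by
  set ρ : EuclideanSpace ℝ (Fin ℓ) := WithLp.toLp 2 fun c => (ℓ : ℝ) - c
  have hρ_pos (c : Fin ℓ) : 0 < ρ c := sub_pos.mpr (Nat.cast_lt.mpr c.isLt)
  have hρ_anti {c d : Fin ℓ} (hcd : c < d) : ρ d < ρ c :=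
    sub_lt_sub_left (Nat.cast_lt.mpr hcd) _
  suffices ∀ α ∈ RposC ℓ, 0 < ⟪ρ, α⟫ by
    intro h
    have := this _ h
    simp only [inner_neg_right, real_inner_smul_right, inner_epsC] at this
    linarith [hρ_pos a]
  rintro α (⟨c, d, hcd, rfl | rfl⟩ | ⟨c, rfl⟩) <;>
    simp only [inner_add_right, inner_sub_right, real_inner_smul_right, inner_epsC]
  · linarith [hρ_anti hcd]
  · linarith [hρ_pos c, hρ_pos d]
  · linarith [hρ_pos c]

def faceC (ℓ : ℕ) (ξ : EuclideanSpace ℝ (Fin ℓ)) : Set (EuclideanSpace ℝ (Fin ℓ)) :=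
  {α | α ∈ RrootC ℓ ∧ ∀ β ∈ RrootC ℓ, ⟪ξ, β⟫ ≤ ⟪ξ, α⟫}

lemma isExtremalC_iff {Ψ : Set (EuclideanSpace ℝ (Fin ℓ))} :
    IsExtremalC ℓ Ψ ↔ ∃ ξ, Ψ = faceC ℓ ξ :=
  Iff.rfl

def sumRootsC (ℓ : ℕ) (S : Set (Fin ℓ)) : Set (EuclideanSpace ℝ (Fin ℓ)) :=
  {v | ∃ a ∈ S, ∃ b ∈ S, a ≤ b ∧ v = epsC ℓ a + epsC ℓ b}

lemma sumRootsC_range {k : ℕ} {ii : Fin k → Fin ℓ} (hii : StrictMono ii) :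
    sumRootsC ℓ (Set.range ii) =
      {v | ∃ p q : Fin k, p ≤ q ∧ v = epsC ℓ (ii p) + epsC ℓ (ii q)} := by
  ext v
  constructor
  · rintro ⟨_, ⟨p, rfl⟩, _, ⟨q, rfl⟩, hpq, rfl⟩
    exact ⟨p, q, hii.le_iff_le.mp hpq, rfl⟩
  · rintro ⟨p, q, hpq, rfl⟩
    exact ⟨_, ⟨p, rfl⟩, _, ⟨q, rfl⟩, hii.monotone hpq, rfl⟩

variable {ξ : EuclideanSpace ℝ (Fin ℓ)} {m : ℝ}

lemma inner_le_of_mem_RrootC (hξ : ∀ a, |ξ a| ≤ m) {β : EuclideanSpace ℝ (Fin ℓ)}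
    (hβ : β ∈ RrootC ℓ) : ⟪ξ, β⟫ ≤ 2 * m := by
  rcases hβ with ⟨a, b, -, rfl | rfl | rfl | rfl⟩ | ⟨a, rfl | rfl⟩ <;>
  · have ha := abs_le.mp (hξ a)
    try have hb := abs_le.mp (hξ b)
    simp only [inner_add_right, inner_sub_right, inner_neg_right, real_inner_smul_right,
      inner_epsC]
    linarith

/-- The bound `2m` is attained at `±2ε_{a₀}`. -/
lemma faceC_eq (hξ : ∀ a, |ξ a| ≤ m) {a₀ : Fin ℓ} (ha₀ : |ξ a₀| = m) :
    faceC ℓ ξ = {α | α ∈ RrootC ℓ ∧ ⟪ξ, α⟫ = 2 * m} := by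
  obtain ⟨γ, hγ, hγm⟩ : ∃ γ ∈ RrootC ℓ, ⟪ξ, γ⟫ = 2 * m := by
    rcases abs_choice (ξ a₀) with h | h
    · refine ⟨_, two_smul_epsC_mem_RrootC a₀, ?_⟩
      rw [real_inner_smul_right, inner_epsC, ← h, ha₀]
    · refine ⟨_, neg_two_smul_epsC_mem_RrootC a₀, ?_⟩
      rw [inner_neg_right, real_inner_smul_right, inner_epsC, ← ha₀, h]
      ring
  ext α
  refine and_congr_right fun hα => ⟨fun hmax => ?_, fun h β hβ => ?_⟩
  · exact (inner_le_of_mem_RrootC hξ hα).antisymm (hγm ▸ hmax γ hγ)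
  · exact h ▸ inner_le_of_mem_RrootC hξ hβ

lemma setOf_inner_eq_two_mul_eq_sumRootsC (hlo : ∀ a, -m < ξ a) (hhi : ∀ a, ξ a ≤ m) :
    {α | α ∈ RrootC ℓ ∧ ⟪ξ, α⟫ = 2 * m} = sumRootsC ℓ {a | ξ a = m} := by
  ext α
  constructor
  · rintro ⟨⟨a, b, hab, rfl | rfl | rfl | rfl⟩ | ⟨a, rfl | rfl⟩, h⟩ <;>
      simp only [inner_add_right, inner_sub_right, inner_neg_right, real_inner_smul_right,
        inner_epsC] at h
    · exact ⟨a, show ξ a = m by linarith [hhi a, hhi b], b,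
        show ξ b = m by linarith [hhi a, hhi b], hab.le, rfl⟩
    · linarith [hlo b, hhi a]
    · linarith [hlo a, hhi b]
    · linarith [hlo a, hlo b]
    · exact ⟨a, show ξ a = m by linarith, a, show ξ a = m by linarith, le_rfl, two_smul ℝ _⟩
    · linarith [hlo a]
  · rintro ⟨a, (ha : ξ a = m), b, (hb : ξ b = m), hab, rfl⟩
    refine ⟨epsC_add_epsC_mem_RrootC hab, ?_⟩
    rw [inner_add_right, inner_epsC, inner_epsC, ha, hb, two_mul]

lemma faceC_eq_sumRootsC (hlo : ∀ a, -m < ξ a) (hhi : ∀ a, ξ a ≤ m) {a₀ : Fin ℓ}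
    (ha₀ : ξ a₀ = m) : faceC ℓ ξ = sumRootsC ℓ {a | ξ a = m} := by
  have habs (a : Fin ℓ) : |ξ a| ≤ m := abs_le.mpr ⟨(hlo a).le, hhi a⟩
  have hm : 0 ≤ m := (abs_nonneg _).trans (habs a₀)
  rw [faceC_eq habs (by rw [ha₀, abs_of_nonneg hm]), setOf_inner_eq_two_mul_eq_sumRootsC hlo hhi]

lemma epsC_sub_epsC_notMem_sumRootsC (S : Set (Fin ℓ)) (a b : Fin ℓ) :
    epsC ℓ a - epsC ℓ b ∉ sumRootsC ℓ S := by
  rintro ⟨c, -, d, -, -, h⟩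
  -- the coordinate sum is `0` on the left and `2` on the right
  have := congrArg (⟪WithLp.toLp 2 fun _ => (1 : ℝ), ·⟫) h
  simp only [inner_add_right, inner_sub_right, inner_epsC] at this
  norm_num at this

lemma exists_eq_sumRootsC_of_isExtremalC (hℓ : 0 < ℓ) {Ψ : Set (EuclideanSpace ℝ (Fin ℓ))}
    (hΨ : IsExtremalC ℓ Ψ) (hsub : Ψ ⊆ RposC ℓ) : ∃ S, S.Nonempty ∧ Ψ = sumRootsC ℓ S := by
  obtain ⟨ξ, rfl⟩ := isExtremalC_iff.mp hΨ
  have : Nonempty (Fin ℓ) := ⟨⟨0, hℓ⟩⟩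
  obtain ⟨a₀, -, ha₀_max⟩ :=
    Finset.univ.exists_max_image (fun a => |ξ a|) Finset.univ_nonempty
  set m := |ξ a₀|
  have habs (a : Fin ℓ) : |ξ a| ≤ m := ha₀_max a (Finset.mem_univ a)
  have hhi (a : Fin ℓ) : ξ a ≤ m := le_of_abs_le (habs a)
  have hlo (a : Fin ℓ) : -m < ξ a := by
    refine (neg_le_of_abs_le (habs a)).lt_of_ne fun h =>
      neg_two_smul_epsC_notMem_RposC a (hsub ?_)
    rw [faceC_eq habs rfl]
    refine ⟨neg_two_smul_epsC_mem_RrootC a, ?_⟩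
    rw [inner_neg_right, real_inner_smul_right, inner_epsC, ← h]
    ring
  have ha₀ : ξ a₀ = m := by
    rcases abs_choice (ξ a₀) with h | h
    · exact h.symm
    · linarith [hlo a₀]
  exact ⟨{a | ξ a = m}, ⟨a₀, ha₀⟩, faceC_eq_sumRootsC hlo hhi ha₀⟩

open Classical in
lemma isExtremalC_sumRootsC {S : Set (Fin ℓ)} (hS : S.Nonempty) :
    IsExtremalC ℓ (sumRootsC ℓ S) := by
  obtain ⟨a₀, ha₀⟩ := hS
  set ξ : EuclideanSpace ℝ (Fin ℓ) := WithLp.toLp 2 fun a => if a ∈ S then 1 else 0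
  have hξ (a : Fin ℓ) : ξ a = if a ∈ S then 1 else 0 := rfl
  have hlo (a : Fin ℓ) : -1 < ξ a := by rw [hξ]; split_ifs <;> norm_num
  have hhi (a : Fin ℓ) : ξ a ≤ 1 := by rw [hξ]; split_ifs <;> norm_num
  have hlevel : {a | ξ a = 1} = S := by
    ext a
    by_cases ha : a ∈ S <;> simp [hξ, ha]
  exact isExtremalC_iff.mpr
    ⟨ξ, hlevel ▸ (faceC_eq_sumRootsC hlo hhi (a₀ := a₀) (by simp [hξ, ha₀])).symm⟩

lemma isExtremalC_iff_exists_sumRootsC (hℓ : 0 < ℓ) {Ψ : Set (EuclideanSpace ℝ (Fin ℓ))}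
    (hsub : Ψ ⊆ RposC ℓ) : IsExtremalC ℓ Ψ ↔ ∃ S, S.Nonempty ∧ Ψ = sumRootsC ℓ S :=
  ⟨fun hΨ => exists_eq_sumRootsC_of_isExtremalC hℓ hΨ hsub,
    fun ⟨_, hS, hΨ⟩ => hΨ ▸ isExtremalC_sumRootsC hS⟩

end RootsC

/-- a subset `Ψ ⊆ R⁺` of the positive roots of type `C_ℓ` is extremal iff
`Ψ = {ε_{i_r} + ε_{i_s} : 1 ≤ r ≤ s ≤ k}` for some `1 ≤ i_1 < ⋯ < i_k ≤ ℓ`; in particular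
no extremal subset of `R⁺` contains a root of the form `ε_a − ε_b`. -/
theorem stmt_11 (ℓ : ℕ) (hℓ : 2 ≤ ℓ)
    (Ψ : Set (EuclideanSpace ℝ (Fin ℓ))) (hsub : Ψ ⊆ RposC ℓ) :
    (IsExtremalC ℓ Ψ ↔
      ∃ k : ℕ, 1 ≤ k ∧ ∃ ii : Fin k → Fin ℓ, StrictMono ii ∧
        Ψ = {v | ∃ p q : Fin k, p ≤ q ∧ v = epsC ℓ (ii p) + epsC ℓ (ii q)}) ∧
    (IsExtremalC ℓ Ψ → ∀ a b : Fin ℓ, epsC ℓ a - epsC ℓ b ∉ Ψ) := by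
  rw [isExtremalC_iff_exists_sumRootsC (by omega) hsub]
  refine ⟨⟨?_, ?_⟩, ?_⟩
  · rintro ⟨S, hS, rfl⟩
    obtain ⟨k, hk, ii, hii, rfl⟩ := exists_fin_strictMono_range_eq S.toFinite hS
    exact ⟨k, hk, ii, hii, sumRootsC_range hii⟩
  · rintro ⟨k, hk, ii, hii, rfl⟩
    exact ⟨_, Set.range_nonempty_iff_nonempty.mpr ⟨⟨0, hk⟩⟩, (sumRootsC_range hii).symm⟩
  · rintro ⟨S, -, rfl⟩ a b
    exact epsC_sub_epsC_notMem_sumRootsC S a b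
end

section
/- Fix ℓ ≥ 2 and 1 ≤ i_1 < ⋯ < i_k ≤ ℓ, and let Ψ = Ψ(i_1,…,i_k) with associated quiver Δ_Ψ on ℕ^ℓ. Then Ψ is regular if and only if i_{r+1} ≠ i_r + 1 for all 1 ≤ r < k. -/
/-- The coordinates of the type `C_ℓ` root `β_{i,j}` (`1 ≤ i ≤ j ≤ ℓ`, `1`-based positions)
with respect to the fundamental weights: the `t`-th coordinate is the multiplicity of `t` in
the multiset `{i, j}` minus its multiplicity in the multiset `{i−1, j−1}`. -/
def betaC (ℓ i j : ℕ) : Fin ℓ → ℤ := fun t =>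
  (if (t : ℕ) + 1 = i then 1 else 0) + (if (t : ℕ) + 1 = j then 1 else 0)
    - (if (t : ℕ) + 2 = i then 1 else 0) - (if (t : ℕ) + 2 = j then 1 else 0)

/-- The arrow relation of the quiver `Δ_Ψ` on `ℕ^ℓ`, for `Ψ` given by a set `S` of index
pairs `(i, j)`, `i ≤ j` : for `i < j` an arrow `λ ← λ + β_{i,j}` whenever `λ_{i−1} ≥ 1`
(no condition when `i = 1`) and `λ_{j−1} ≥ 1`; for `i = j` an arrow `λ ← λ + β_{i,i}`
whenever `λ_{i−1} ≥ 2` (no condition when `i = 1`). -/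
def arrowC (ℓ : ℕ) (S : Set (ℕ × ℕ)) (lam mu : Fin ℓ → ℕ) : Prop :=
  ∃ p ∈ S, (∀ t : Fin ℓ, (mu t : ℤ) = (lam t : ℤ) + betaC ℓ p.1 p.2 t) ∧
    (if p.1 = p.2 then ∀ t : Fin ℓ, (t : ℕ) + 2 = p.1 → 2 ≤ lam t
     else (∀ t : Fin ℓ, (t : ℕ) + 2 = p.1 → 1 ≤ lam t) ∧
       (∀ t : Fin ℓ, (t : ℕ) + 2 = p.2 → 1 ≤ lam t))

/-- `t_{λ,η}` : the number of `μ ∈ ℕ^ℓ` such that both `λ ← μ` and `μ ← λ + η` are arrows. -/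
noncomputable def tCount (ℓ : ℕ) (S : Set (ℕ × ℕ)) (lam : Fin ℓ → ℕ) (η : Fin ℓ → ℤ) : ℕ :=
  Nat.card {mu : Fin ℓ → ℕ | arrowC ℓ S lam mu ∧
    ∃ nu : Fin ℓ → ℕ, (∀ t, (nu t : ℤ) = (lam t : ℤ) + η t) ∧ arrowC ℓ S mu nu}

/-- `m_η` : the number of ordered pairs `(β, β') ∈ Ψ × Ψ` of roots with `β + β' = η`. -/
noncomputable def mCount (ℓ : ℕ) (Ψv : Set (Fin ℓ → ℤ)) (η : Fin ℓ → ℤ) : ℕ :=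
  Nat.card {bb : (Fin ℓ → ℤ) × (Fin ℓ → ℤ) | bb.1 ∈ Ψv ∧ bb.2 ∈ Ψv ∧ bb.1 + bb.2 = η}

/-
Write `pairMult p v` for the multiplicity of `v` in the multiset `{p.1, p.2}`, so that
`β_p = pairMult p (· + 1) - pairMult p (· + 2)` and the arrow `λ ← λ + β_p` exists iff
`λ_t ≥ pairMult p (t + 2)` for all `t`. Sending a midpoint `μ` of a two-step path `λ ← μ ← λ + η`
to `(μ - λ, λ + η - μ)` injects the paths counted by `t_{λ,η}` into the pairs counted by `m_η`.

If no two indices are adjacent, the coordinates of `η = β_p + β_q` at the indices recover the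
multiset `{p.1, p.2, q.1, q.2}`, and the path conditions collapse to
`λ_t ≥ pairMult p (t + 2) + pairMult q (t + 2)`, which depends only on that multiset; so once
one decomposition of `η` is realised, all are.
If `i` and `i + 1` are both indices, then for `λ = 2ϖ_{i-1}` and `η = β_{i,i} + β_{i+1,i+1}` the
path through `2ϖ_i` exists, but the decomposition `η = β_{i,i+1} + β_{i,i+1}` is not realised
since `λ_i = 0`.
-/

def pairMult (p : ℕ × ℕ) (v : ℕ) : ℤ :=
  (if v = p.1 then 1 else 0) + (if v = p.2 then 1 else 0)

def rootC (ℓ : ℕ) (p : ℕ × ℕ) : Fin ℓ → ℤ := betaC ℓ p.1 p.2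

def midpoints (ℓ : ℕ) (S : Set (ℕ × ℕ)) (lam : Fin ℓ → ℕ) (η : Fin ℓ → ℤ) : Set (Fin ℓ → ℕ) :=
  {mu | arrowC ℓ S lam mu ∧
    ∃ nu : Fin ℓ → ℕ, (∀ t, (nu t : ℤ) = (lam t : ℤ) + η t) ∧ arrowC ℓ S mu nu}

def rootPairs (ℓ : ℕ) (Ψv : Set (Fin ℓ → ℤ)) (η : Fin ℓ → ℤ) :
    Set ((Fin ℓ → ℤ) × (Fin ℓ → ℤ)) :=
  {bb | bb.1 ∈ Ψv ∧ bb.2 ∈ Ψv ∧ bb.1 + bb.2 = η}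

def stepPair {ℓ : ℕ} (lam : Fin ℓ → ℕ) (η : Fin ℓ → ℤ) (mu : Fin ℓ → ℕ) :
    (Fin ℓ → ℤ) × (Fin ℓ → ℤ) :=
  (fun t => (mu t : ℤ) - lam t, fun t => η t - ((mu t : ℤ) - lam t))

/-- The conditions for the arrows `λ ← λ + β_p ← λ + β_p + β_q`. -/
def Admissible {ℓ : ℕ} (lam : Fin ℓ → ℤ) (p q : ℕ × ℕ) : Prop :=
  (∀ t : Fin ℓ, pairMult p (t + 2) ≤ lam t) ∧
    ∀ t : Fin ℓ, pairMult q (t + 2) ≤ lam t + rootC ℓ p t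

lemma pairMult_nonneg (p : ℕ × ℕ) (v : ℕ) : 0 ≤ pairMult p v := by
  unfold pairMult; split_ifs <;> omega

lemma pairMult_eq_zero {I : Set ℕ} {p : ℕ × ℕ} {v : ℕ} (hp : p ∈ I ×ˢ I) (hv : v ∉ I) :
    pairMult p v = 0 := by
  unfold pairMult
  rw [if_neg fun h : v = p.1 => hv (h ▸ hp.1), if_neg fun h : v = p.2 => hv (h ▸ hp.2)]
  rfl

lemma rootC_apply (ℓ : ℕ) (p : ℕ × ℕ) (t : Fin ℓ) :
    rootC ℓ p t = pairMult p (t + 1) - pairMult p (t + 2) := by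
  simp only [rootC, betaC, pairMult]; ring

lemma arrowC_iff {ℓ : ℕ} {S : Set (ℕ × ℕ)} {lam mu : Fin ℓ → ℕ} :
    arrowC ℓ S lam mu ↔ ∃ p ∈ S, (∀ t, (mu t : ℤ) = lam t + rootC ℓ p t) ∧
      ∀ t : Fin ℓ, pairMult p (t + 2) ≤ lam t := by
  unfold arrowC
  refine exists_congr fun p => and_congr_right fun _ => and_congr_right fun _ => ?_
  simp only [pairMult]
  split_ifs with hp
  · refine ⟨fun h t => ?_, fun h t ht => ?_⟩
    · split_ifs <;> first | omega | (have := h t (by omega); omega)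
    · have := h t; split_ifs at this <;> omega
  · refine ⟨fun h t => ?_, fun h => ⟨fun t ht => ?_, fun t ht => ?_⟩⟩
    · split_ifs <;> first | omega | (have := h.1 t (by omega); omega) |
        (have := h.2 t (by omega); omega)
    all_goals have := h t; split_ifs at this <;> omega

lemma add_rootC_nonneg {ℓ : ℕ} {x : Fin ℓ → ℤ} {p : ℕ × ℕ}
    (h : ∀ t : Fin ℓ, pairMult p (t + 2) ≤ x t) (t : Fin ℓ) : 0 ≤ x t + rootC ℓ p t := by
  rw [rootC_apply]; linarith [h t, pairMult_nonneg p (t + 1)]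

lemma stepPair_injective {ℓ : ℕ} (lam : Fin ℓ → ℕ) (η : Fin ℓ → ℤ) :
    Function.Injective (stepPair lam η) := by
  intro x y h
  funext t
  have := congrFun (congrArg Prod.fst h) t
  simp only [stepPair] at this
  omega

lemma image_stepPair_midpoints {ℓ : ℕ} (S : Set (ℕ × ℕ)) (lam : Fin ℓ → ℕ) (η : Fin ℓ → ℤ) :
    stepPair lam η '' midpoints ℓ S lam η =
      {bb | ∃ p ∈ S, ∃ q ∈ S, bb = (rootC ℓ p, rootC ℓ q) ∧ rootC ℓ p + rootC ℓ q = η ∧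
        Admissible (fun t => (lam t : ℤ)) p q} := by
  ext bb
  constructor
  · rintro ⟨mu, ⟨hlm, nu, hnu, hmn⟩, rfl⟩
    obtain ⟨p, hp, hmu, hcp⟩ := arrowC_iff.mp hlm
    obtain ⟨q, hq, hnu', hcq⟩ := arrowC_iff.mp hmn
    refine ⟨p, hp, q, hq, ?_, funext fun t => ?_, hcp, fun t => hmu t ▸ hcq t⟩
    · refine Prod.ext (funext fun t => ?_) (funext fun t => ?_)
      · simp only [stepPair]; linarith [hmu t]
      · simp only [stepPair]; linarith [hmu t, hnu t, hnu' t]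
    · simp only [Pi.add_apply]; linarith [hmu t, hnu t, hnu' t]
  · rintro ⟨p, hp, q, hq, rfl, hη, hcp, hcq⟩
    have hmu := add_rootC_nonneg hcp
    have hnu := add_rootC_nonneg hcq
    refine ⟨fun t => (lam t + rootC ℓ p t).toNat, ⟨arrowC_iff.mpr ⟨p, hp, ?_, hcp⟩,
      fun t => (lam t + rootC ℓ p t + rootC ℓ q t).toNat, ?_, arrowC_iff.mpr ⟨q, hq, ?_, ?_⟩⟩, ?_⟩
    · intro t; simp [hmu t]
    · intro t
      rw [Int.toNat_of_nonneg (hnu t), ← hη, Pi.add_apply, add_assoc]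
    · intro t; simp [hmu t, hnu t]
    · intro t; simpa [hmu t] using hcq t
    · refine Prod.ext (funext fun t => ?_) (funext fun t => ?_)
      · simp [stepPair, hmu t]
      · simp [stepPair, hmu t, ← hη]

lemma tCount_eq_ncard_image {ℓ : ℕ} (S : Set (ℕ × ℕ)) (lam : Fin ℓ → ℕ) (η : Fin ℓ → ℤ) :
    tCount ℓ S lam η = (stepPair lam η '' midpoints ℓ S lam η).ncard := by
  rw [Set.ncard_image_of_injective _ (stepPair_injective lam η), ← Nat.card_coe_set_eq]
  rfl

lemma mCount_eq_ncard (ℓ : ℕ) (Ψv : Set (Fin ℓ → ℤ)) (η : Fin ℓ → ℤ) :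
    mCount ℓ Ψv η = (rootPairs ℓ Ψv η).ncard := by
  rw [← Nat.card_coe_set_eq]
  rfl

lemma image_stepPair_subset_rootPairs {ℓ : ℕ} (S : Set (ℕ × ℕ)) (lam : Fin ℓ → ℕ)
    (η : Fin ℓ → ℤ) : stepPair lam η '' midpoints ℓ S lam η ⊆ rootPairs ℓ (rootC ℓ '' S) η := by
  rw [image_stepPair_midpoints]
  rintro _ ⟨p, hp, q, hq, rfl, hη, -⟩
  exact ⟨⟨p, hp, rfl⟩, ⟨q, hq, rfl⟩, hη⟩

lemma rootPairs_finite {ℓ : ℕ} {Ψv : Set (Fin ℓ → ℤ)} (h : Ψv.Finite) (η : Fin ℓ → ℤ) :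
    (rootPairs ℓ Ψv η).Finite :=
  (h.prod h).subset fun _ hb => ⟨hb.1, hb.2.1⟩

section Separated

variable {ℓ : ℕ} {I : Set ℕ}

lemma pairMult_add_eq_of_rootC_add_eq (hIℓ : ∀ v ∈ I, v ≤ ℓ) (hsep : ∀ v ∈ I, v + 1 ∉ I)
    {p q p' q' : ℕ × ℕ} (hp : p ∈ I ×ˢ I) (hq : q ∈ I ×ˢ I) (hp' : p' ∈ I ×ˢ I)
    (hq' : q' ∈ I ×ˢ I) (h : rootC ℓ p + rootC ℓ q = rootC ℓ p' + rootC ℓ q') (v : ℕ) :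
    pairMult p (v + 1) + pairMult q (v + 1) = pairMult p' (v + 1) + pairMult q' (v + 1) := by
  by_cases hv : v + 1 ∈ I
  · have hv2 := hsep _ hv
    have := congrFun h ⟨v, by linarith [hIℓ _ hv]⟩
    simp only [Pi.add_apply, rootC_apply, pairMult_eq_zero hp hv2, pairMult_eq_zero hq hv2,
      pairMult_eq_zero hp' hv2, pairMult_eq_zero hq' hv2] at this
    linarith
  · simp only [pairMult_eq_zero hp hv, pairMult_eq_zero hq hv, pairMult_eq_zero hp' hv,
      pairMult_eq_zero hq' hv]

lemma admissible_iff_of_sep (hsep : ∀ v ∈ I, v + 1 ∉ I) {p q : ℕ × ℕ}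
    (hp : p ∈ I ×ˢ I) (hq : q ∈ I ×ˢ I) (lam : Fin ℓ → ℤ) :
    Admissible lam p q ↔ ∀ t : Fin ℓ, pairMult p (t + 2) + pairMult q (t + 2) ≤ lam t := by
  have hroot : ∀ t : Fin ℓ, (t : ℕ) + 2 ∈ I → rootC ℓ p t = -pairMult p (t + 2) := by
    intro t ht
    rw [rootC_apply, pairMult_eq_zero hp fun ht1 => hsep _ ht1 ht]
    ring
  constructor
  · rintro ⟨hcp, hcq⟩ t
    by_cases ht : (t : ℕ) + 2 ∈ I
    · linarith [hcq t, hroot t ht]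
    · rw [pairMult_eq_zero hp ht, pairMult_eq_zero hq ht, zero_add]
      exact le_trans (pairMult_nonneg _ _) (hcp t)
  · intro h
    have hcp : ∀ t : Fin ℓ, pairMult p (t + 2) ≤ lam t := fun t =>
      by linarith [h t, pairMult_nonneg q (t + 2)]
    refine ⟨hcp, fun t => ?_⟩
    by_cases ht : (t : ℕ) + 2 ∈ I
    · linarith [h t, hroot t ht]
    · rw [pairMult_eq_zero hq ht]
      exact add_rootC_nonneg hcp t

lemma image_stepPair_eq_rootPairs_of_sep {S : Set (ℕ × ℕ)} (hS : S ⊆ I ×ˢ I)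
    (hIℓ : ∀ v ∈ I, v ≤ ℓ) (hsep : ∀ v ∈ I, v + 1 ∉ I) {lam : Fin ℓ → ℕ} {η : Fin ℓ → ℤ}
    (hne : (midpoints ℓ S lam η).Nonempty) :
    stepPair lam η '' midpoints ℓ S lam η = rootPairs ℓ (rootC ℓ '' S) η := by
  refine (image_stepPair_subset_rootPairs S lam η).antisymm ?_
  obtain ⟨_, ⟨p, hp, q, hq, -, hη, hadm⟩⟩ := (hne.image (stepPair lam η)).mono
    (image_stepPair_midpoints S lam η).subset
  rintro ⟨_, _⟩ ⟨⟨p', hp', rfl⟩, ⟨q', hq', rfl⟩, hη'⟩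
  rw [image_stepPair_midpoints]
  refine ⟨p', hp', q', hq', rfl, hη', ?_⟩
  rw [admissible_iff_of_sep hsep (hS hp) (hS hq)] at hadm
  rw [admissible_iff_of_sep hsep (hS hp') (hS hq')]
  intro t
  rw [← pairMult_add_eq_of_rootC_add_eq hIℓ hsep (hS hp) (hS hq) (hS hp') (hS hq')
    (hη.trans hη'.symm) (t + 1)]
  exact hadm t

lemma tCount_eq_mCount_of_sep {S : Set (ℕ × ℕ)} (hS : S ⊆ I ×ˢ I)
    (hIℓ : ∀ v ∈ I, v ≤ ℓ) (hsep : ∀ v ∈ I, v + 1 ∉ I) {lam : Fin ℓ → ℕ} {η : Fin ℓ → ℤ}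
    (hpos : 0 < tCount ℓ S lam η) : tCount ℓ S lam η = mCount ℓ (rootC ℓ '' S) η := by
  have hne : (midpoints ℓ S lam η).Nonempty := by
    rw [tCount_eq_ncard_image] at hpos
    exact (Set.nonempty_of_ncard_ne_zero hpos.ne').of_image
  rw [tCount_eq_ncard_image, mCount_eq_ncard, image_stepPair_eq_rootPairs_of_sep hS hIℓ hsep hne]

end Separated

lemma exists_tCount_lt_mCount_of_adjacent {ℓ i : ℕ} {S : Set (ℕ × ℕ)} (hSfin : S.Finite)
    (hi : 1 ≤ i) (hiℓ : i < ℓ) (hS₁ : (i, i) ∈ S) (hS₂ : (i + 1, i + 1) ∈ S)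
    (hS₃ : (i, i + 1) ∈ S) :
    ∃ lam : Fin ℓ → ℕ, 0 < tCount ℓ S lam (rootC ℓ (i, i) + rootC ℓ (i + 1, i + 1)) ∧
      tCount ℓ S lam (rootC ℓ (i, i) + rootC ℓ (i + 1, i + 1)) <
        mCount ℓ (rootC ℓ '' S) (rootC ℓ (i, i) + rootC ℓ (i + 1, i + 1)) := by
  set η := rootC ℓ (i, i) + rootC ℓ (i + 1, i + 1) with hη
  let lam : Fin ℓ → ℕ := fun t => if (t : ℕ) + 2 = i then 2 else 0
  have hfin := rootPairs_finite (hSfin.image (rootC ℓ)) η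
  have hsub := image_stepPair_subset_rootPairs S lam η
  have hpath :
      (rootC ℓ (i, i), rootC ℓ (i + 1, i + 1)) ∈ stepPair lam η '' midpoints ℓ S lam η := by
    rw [image_stepPair_midpoints]
    refine ⟨_, hS₁, _, hS₂, rfl, rfl, fun t => ?_, fun t => ?_⟩ <;>
      simp only [lam, rootC_apply, pairMult] <;> split_ifs <;> omega
  have hmix : (rootC ℓ (i, i + 1), rootC ℓ (i, i + 1)) ∈ rootPairs ℓ (rootC ℓ '' S) η := by
    refine ⟨⟨_, hS₃, rfl⟩, ⟨_, hS₃, rfl⟩, funext fun t => ?_⟩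
    simp only [hη, Pi.add_apply, rootC_apply, pairMult]
    split_ifs <;> omega
  have hmix_not :
      (rootC ℓ (i, i + 1), rootC ℓ (i, i + 1)) ∉ stepPair lam η '' midpoints ℓ S lam η := by
    rw [image_stepPair_midpoints]
    rintro ⟨p, -, q, -, hpq, -, hcp, -⟩
    -- a root equal to `β_{i,i+1}` involves the index `i + 1`, which needs `λ_i ≥ 1`
    have hroot := congrFun (congrArg Prod.fst hpq) ⟨i, hiℓ⟩
    have hlam := hcp ⟨i - 1, by omega⟩
    simp only [rootC_apply, lam] at hroot hlam
    have := pairMult_nonneg p (i + 2)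
    simp only [pairMult] at hroot hlam this
    split_ifs at hroot hlam this <;> omega
  refine ⟨lam, ?_, ?_⟩
  · rw [tCount_eq_ncard_image]
    exact (Set.nonempty_of_mem hpath).ncard_pos (hfin.subset hsub)
  · rw [tCount_eq_ncard_image, mCount_eq_ncard]
    exact Set.ncard_lt_ncard (hsub.ssubset_of_not_subset fun h => hmix_not (h hmix)) hfin

lemma StrictMono.val_eq_succ_of_apply_eq_succ {k : ℕ} {f : Fin k → ℕ} (hf : StrictMono f)
    {p q : Fin k} (h : f q = f p + 1) : (q : ℕ) = p + 1 := by
  have hpq : p < q := hf.lt_iff_lt.mp (by omega)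
  by_contra hne
  have hr : (p : ℕ) + 1 < k := by omega
  have h₁ := hf (show p < ⟨p + 1, hr⟩ from Fin.lt_def.mpr (by simp))
  have h₂ := hf (show (⟨p + 1, hr⟩ : Fin k) < q from Fin.lt_def.mpr (by simp; omega))
  omega

theorem stmt_12_general (ℓ k : ℕ)
    (ii : Fin k → ℕ) (hii : StrictMono ii) (h1 : ∀ t, 1 ≤ ii t) (hub : ∀ t, ii t ≤ ℓ)
    (S : Set (ℕ × ℕ)) (hS : S = {pq | ∃ p q : Fin k, p ≤ q ∧ pq = (ii p, ii q)})
    (Ψv : Set (Fin ℓ → ℤ))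
    (hΨv : Ψv = {v | ∃ p q : Fin k, p ≤ q ∧ v = betaC ℓ (ii p) (ii q)}) :
    (∀ η : Fin ℓ → ℤ, (∃ v ∈ Ψv, ∃ w ∈ Ψv, η = v + w) →
        ∀ lam : Fin ℓ → ℕ, 0 < tCount ℓ S lam η → tCount ℓ S lam η = mCount ℓ Ψv η) ↔
      (∀ p q : Fin k, (q : ℕ) = (p : ℕ) + 1 → ii q ≠ ii p + 1) := by
  have hmem : ∀ p q : Fin k, p ≤ q → (ii p, ii q) ∈ S := fun p q h => hS ▸ ⟨p, q, h, rfl⟩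
  have hΨS : Ψv = rootC ℓ '' S := by
    subst hS hΨv
    ext v
    simp only [Set.mem_image, Set.mem_ofPred_eq, rootC]
    grind
  subst hΨS
  constructor
  · intro hreg p q hpq hadj
    have hle : p ≤ q := Fin.le_def.mpr (by omega)
    have hSfin : S.Finite :=
      hS ▸ (Set.finite_range fun pq : Fin k × Fin k => (ii pq.1, ii pq.2)).subset
        (by rintro _ ⟨p, q, -, rfl⟩; exact ⟨(p, q), rfl⟩)
    have hiℓ : ii p < ℓ := by have := hub q; omega
    obtain ⟨lam, hpos, hlt⟩ := exists_tCount_lt_mCount_of_adjacent hSfin (h1 p) hiℓ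
      (hmem p p le_rfl) (hadj ▸ hmem q q le_rfl) (hadj ▸ hmem p q hle)
    exact hlt.ne (hreg _ ⟨_, ⟨_, hmem p p le_rfl, rfl⟩, _, ⟨_, hadj ▸ hmem q q le_rfl, rfl⟩, rfl⟩
      lam hpos)
  · intro hgap η _ lam hpos
    have hSI : S ⊆ Set.range ii ×ˢ Set.range ii := by
      rw [hS]; rintro _ ⟨p, q, -, rfl⟩; exact ⟨⟨p, rfl⟩, ⟨q, rfl⟩⟩
    refine tCount_eq_mCount_of_sep hSI (by rintro _ ⟨p, rfl⟩; exact hub p) ?_ hpos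
    rintro _ ⟨p, rfl⟩ ⟨q, hq⟩
    exact hgap p q (hii.val_eq_succ_of_apply_eq_succ hq) hq

/-- `Ψ = Ψ(i_1, …, i_k)` is regular (`t_{λ,η} > 0 ⟹ t_{λ,η} = m_η` for all
`η ∈ Ψ + Ψ` and all `λ`) iff `i_{r+1} ≠ i_r + 1` for all `1 ≤ r < k`. -/
theorem stmt_12 (ℓ k : ℕ) (hℓ : 2 ≤ ℓ) (hk : 1 ≤ k)
    (ii : Fin k → ℕ) (hii : StrictMono ii) (h1 : ∀ t, 1 ≤ ii t) (hub : ∀ t, ii t ≤ ℓ)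
    (S : Set (ℕ × ℕ)) (hS : S = {pq | ∃ p q : Fin k, p ≤ q ∧ pq = (ii p, ii q)})
    (Ψv : Set (Fin ℓ → ℤ))
    (hΨv : Ψv = {v | ∃ p q : Fin k, p ≤ q ∧ v = betaC ℓ (ii p) (ii q)}) :
    (∀ η : Fin ℓ → ℤ, (∃ v ∈ Ψv, ∃ w ∈ Ψv, η = v + w) →
        ∀ lam : Fin ℓ → ℕ, 0 < tCount ℓ S lam η → tCount ℓ S lam η = mCount ℓ Ψv η) ↔
      (∀ p q : Fin k, (q : ℕ) = (p : ℕ) + 1 → ii q ≠ ii p + 1) :=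
  stmt_12_general ℓ k ii hii h1 hub S hS Ψv hΨv
end

section
/- Let Δ be the quiver with vertex set ℕ² and arrows (m,n) ← (m+1, n+1) for all (m,n) ∈ ℕ², and (m,n) ← (m+2, n−1) for all (m,n) ∈ ℕ² with n ≥ 1. Then Δ has exactly three connected components, whose vertex sets are C_r = {(m,n) ∈ ℕ² : m − n ≡ r (mod 3)} for r = 0, 1, 2, and the full subquivers of Δ on C_0, C_1 and C_2 are pairwise non-isomorphic. -/
/-!
Both kinds of arrow preserve `m - n mod 3`. Conversely, the arrows `(m, n) ← (m + 2, n - 1)` join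
every vertex to the point `(m + 2n, 0)` of the axis `n = 0`, and `(k, 0) ← (k + 1, 1) → (k + 3, 0)`
joins axis points three apart; since `m - n ≡ m + 2n (mod 3)`, the three classes are exactly the
components.

The components are told apart by sinks with at most one incoming arrow: in `Δ` these are `(0, 0)`
and `(1, 0)`, lying in `C_0` and `C_1`, so `C_2` has none. The only arrow into `(0, 0)` comes from
`(1, 1)`, which has one outgoing arrow, whereas the only arrow into `(1, 0)` comes from `(2, 1)`,
which has two.
-/

/-- The arrow relation of the quiver `Δ` on `ℕ²` : arrows `(m,n) ← (m+1, n+1)` and, for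
`n ≥ 1`, `(m,n) ← (m+2, n−1)`.  `arr17 p q` means that there is an arrow `p ← q`. -/
def arr17 (p q : ℕ × ℕ) : Prop :=
  q = (p.1 + 1, p.2 + 1) ∨ (1 ≤ p.2 ∧ q = (p.1 + 2, p.2 - 1))

open Relation Set Function

section Neighbors

variable {α β : Type*}

-- As for `arr17`, `R x y` is read as an arrow `x ← y`.
def outNeighbors (R : α → α → Prop) (v : α) : Set α := {w | R w v}

def inNeighbors (R : α → α → Prop) (v : α) : Set α := {u | R v u}

def IsLeafSink (R : α → α → Prop) (v : α) : Prop :=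
  outNeighbors R v = ∅ ∧ (inNeighbors R v).Subsingleton

def IsForkFedLeafSink (R : α → α → Prop) (v : α) : Prop :=
  IsLeafSink R v ∧ ∃ u ∈ inNeighbors R v, (outNeighbors R u).Nontrivial

structure IsNeighborhoodEmbedding (R : α → α → Prop) (S : β → β → Prop) (f : α → β) : Prop where
  injective : Injective f
  image_outNeighbors (v : α) : f '' outNeighbors R v = outNeighbors S (f v)
  image_inNeighbors (v : α) : f '' inNeighbors R v = inNeighbors S (f v)

namespace IsNeighborhoodEmbedding

variable {R : α → α → Prop} {S : β → β → Prop} {f : α → β}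

theorem isLeafSink_iff (hf : IsNeighborhoodEmbedding R S f) (v : α) :
    IsLeafSink S (f v) ↔ IsLeafSink R v := by
  rw [IsLeafSink, IsLeafSink, ← hf.image_outNeighbors, ← hf.image_inNeighbors, image_eq_empty,
    hf.injective.subsingleton_image_iff]

theorem isForkFedLeafSink_iff (hf : IsNeighborhoodEmbedding R S f) (v : α) :
    IsForkFedLeafSink S (f v) ↔ IsForkFedLeafSink R v := by
  simp only [IsForkFedLeafSink, hf.isLeafSink_iff, ← hf.image_inNeighbors, exists_mem_image,
    ← hf.image_outNeighbors, image_nontrivial hf.injective]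

theorem exists_isLeafSink_iff (hf : IsNeighborhoodEmbedding R S f) :
    (∃ v, IsLeafSink R v) ↔ ∃ w ∈ range f, IsLeafSink S w := by
  simp only [exists_range_iff, hf.isLeafSink_iff]

theorem exists_isForkFedLeafSink_iff (hf : IsNeighborhoodEmbedding R S f) :
    (∃ v, IsForkFedLeafSink R v) ↔ ∃ w ∈ range f, IsForkFedLeafSink S w := by
  simp only [exists_range_iff, hf.isForkFedLeafSink_iff]

end IsNeighborhoodEmbedding

theorem RelIso.isNeighborhoodEmbedding {R : α → α → Prop} {S : β → β → Prop} (e : R ≃r S) :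
    IsNeighborhoodEmbedding R S e where
  injective := e.injective
  image_outNeighbors v := by
    ext w
    refine ⟨?_, fun hw => ⟨e.symm w, ?_, e.apply_symm_apply w⟩⟩
    · rintro ⟨x, hx, rfl⟩
      exact e.map_rel_iff.2 hx
    · simpa [outNeighbors] using e.symm.map_rel_iff.2 hw
  image_inNeighbors v := by
    ext w
    refine ⟨?_, fun hw => ⟨e.symm w, ?_, e.apply_symm_apply w⟩⟩
    · rintro ⟨x, hx, rfl⟩
      exact e.map_rel_iff.2 hx
    · simpa [inNeighbors] using e.symm.map_rel_iff.2 hw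

theorem RelIso.exists_isLeafSink_iff {R : α → α → Prop} {S : β → β → Prop} (e : R ≃r S) :
    (∃ v, IsLeafSink R v) ↔ ∃ w, IsLeafSink S w := by
  simp [e.isNeighborhoodEmbedding.exists_isLeafSink_iff, e.range_eq]

theorem RelIso.exists_isForkFedLeafSink_iff {R : α → α → Prop} {S : β → β → Prop} (e : R ≃r S) :
    (∃ v, IsForkFedLeafSink R v) ↔ ∃ w, IsForkFedLeafSink S w := by
  simp [e.isNeighborhoodEmbedding.exists_isForkFedLeafSink_iff, e.range_eq]

theorem isNeighborhoodEmbedding_subtypeVal {R : α → α → Prop} {p : α → Prop}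
    (hp : ∀ ⦃x y⦄, R x y → (p x ↔ p y)) :
    IsNeighborhoodEmbedding (Subrel R p) R Subtype.val where
  injective := Subtype.val_injective
  image_outNeighbors v := by
    ext w
    exact ⟨by rintro ⟨w, hw, rfl⟩; exact hw, fun hw => ⟨⟨w, (hp hw).2 v.2⟩, hw, rfl⟩⟩
  image_inNeighbors v := by
    ext w
    exact ⟨by rintro ⟨w, hw, rfl⟩; exact hw, fun hw => ⟨⟨w, (hp hw).1 v.2⟩, hw, rfl⟩⟩

end Neighbors

def residue (p : ℕ × ℕ) : ℤ := ((p.1 : ℤ) - p.2) % 3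

theorem residue_eq_of_arr17 {p q : ℕ × ℕ} (h : arr17 p q) : residue p = residue q := by
  rcases h with rfl | ⟨hp, rfl⟩ <;> simp only [residue] <;> omega

theorem residue_eq_of_reflTransGen {p q : ℕ × ℕ} (h : ReflTransGen (SymmGen arr17) p q) :
    residue p = residue q := by
  induction h with
  | refl => rfl
  | tail _ hbc ih =>
    exact ih.trans (hbc.elim residue_eq_of_arr17 fun h => (residue_eq_of_arr17 h).symm)

theorem reflTransGen_symmGen_arr17_axis (m n : ℕ) :
    ReflTransGen (SymmGen arr17) (m, n) (m + 2 * n, 0) := by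
  induction n generalizing m with
  | zero => rfl
  | succ n ih =>
    have harr : arr17 (m, n + 1) (m + 2, n) := Or.inr ⟨by omega, rfl⟩
    rw [show m + 2 * (n + 1) = m + 2 + 2 * n by ring]
    exact .head (Or.inl harr) (ih (m + 2))

theorem reflTransGen_symmGen_arr17_along_axis (k t : ℕ) :
    ReflTransGen (SymmGen arr17) (k, 0) (k + 3 * t, 0) := by
  induction t with
  | zero => rfl
  | succ t ih =>
    have h₁ : arr17 (k + 3 * t, 0) (k + 3 * t + 1, 1) := Or.inl rfl
    have h₂ : arr17 (k + 3 * t + 1, 1) (k + 3 * (t + 1), 0) :=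
      Or.inr ⟨le_rfl, Prod.ext (by simp only; omega) rfl⟩
    exact ih.trans (.head (Or.inl h₁) (.single (Or.inl h₂)))

theorem reflTransGen_symmGen_arr17_iff (p q : ℕ × ℕ) :
    ReflTransGen (SymmGen arr17) p q ↔ residue p = residue q := by
  refine ⟨residue_eq_of_reflTransGen, fun h => ?_⟩
  obtain ⟨m, n⟩ := p
  obtain ⟨m', n'⟩ := q
  wlog hle : m + 2 * n ≤ m' + 2 * n' generalizing m n m' n'
  · exact Std.Symm.symm _ _ (this m' n' m n h.symm (by omega))
  obtain ⟨t, ht⟩ : ∃ t, m' + 2 * n' = m + 2 * n + 3 * t :=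
    ⟨(m' + 2 * n' - (m + 2 * n)) / 3, by simp only [residue] at h; omega⟩
  have hq := Std.Symm.symm _ _ (reflTransGen_symmGen_arr17_axis m' n')
  rw [ht] at hq
  exact (reflTransGen_symmGen_arr17_axis m n).trans
    ((reflTransGen_symmGen_arr17_along_axis _ t).trans hq)

theorem outNeighbors_arr17_eq_empty_iff (v : ℕ × ℕ) :
    outNeighbors arr17 v = ∅ ↔ v.1 = 0 ∨ v = (1, 0) := by
  obtain ⟨m, n⟩ := v
  simp only [eq_empty_iff_forall_notMem, outNeighbors, mem_ofPred_eq, arr17, Prod.ext_iff]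
  constructor
  · intro h
    by_contra! hmn
    rcases Nat.eq_zero_or_pos n with rfl | hn
    · exact h (m - 2, 1) (Or.inr ⟨le_rfl, by omega, rfl⟩)
    · exact h (m - 1, n - 1) (Or.inl ⟨by omega, by omega⟩)
  · rintro hmn w (h | ⟨hw, h⟩) <;> omega

theorem inNeighbors_arr17_of_snd_eq_zero (m : ℕ) : inNeighbors arr17 (m, 0) = {(m + 1, 1)} := by
  ext u
  simp [inNeighbors, arr17]

theorem inNeighbors_arr17_subsingleton_iff (v : ℕ × ℕ) :
    (inNeighbors arr17 v).Subsingleton ↔ v.2 = 0 := by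
  obtain ⟨m, n⟩ := v
  refine ⟨fun h => ?_, by rintro rfl; simp [inNeighbors_arr17_of_snd_eq_zero]⟩
  by_contra hn
  have := @h (m + 1, n + 1) (Or.inl rfl) (m + 2, n - 1) (Or.inr ⟨by omega, rfl⟩)
  simp at this

theorem isLeafSink_arr17_iff (v : ℕ × ℕ) : IsLeafSink arr17 v ↔ v = (0, 0) ∨ v = (1, 0) := by
  rw [IsLeafSink, outNeighbors_arr17_eq_empty_iff, inNeighbors_arr17_subsingleton_iff]
  obtain ⟨m, n⟩ := v
  simp only [Prod.ext_iff]
  omega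

theorem outNeighbors_arr17_one_one_subsingleton : (outNeighbors arr17 (1, 1)).Subsingleton := by
  rintro a (h | ⟨_, h⟩) b (h' | ⟨_, h'⟩) <;> simp only [Prod.ext_iff] at h h' <;> ext <;> omega

theorem outNeighbors_arr17_two_one_nontrivial : (outNeighbors arr17 (2, 1)).Nontrivial :=
  ⟨(1, 0), Or.inl rfl, (0, 2), Or.inr ⟨by omega, rfl⟩, by simp⟩

theorem isForkFedLeafSink_arr17_iff (v : ℕ × ℕ) : IsForkFedLeafSink arr17 v ↔ v = (1, 0) := by
  rw [IsForkFedLeafSink, isLeafSink_arr17_iff]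
  constructor
  · rintro ⟨rfl | rfl, u, hu, hnt⟩
    · rw [inNeighbors_arr17_of_snd_eq_zero, mem_singleton_iff] at hu
      subst hu
      exact absurd outNeighbors_arr17_one_one_subsingleton hnt.not_subsingleton
    · rfl
  · rintro rfl
    refine ⟨Or.inr rfl, (2, 1), ?_, outNeighbors_arr17_two_one_nontrivial⟩
    simp [inNeighbors_arr17_of_snd_eq_zero]

theorem residue_eq_iff_of_arr17 (r : ℤ) ⦃p q : ℕ × ℕ⦄ (h : arr17 p q) :
    residue p = r ↔ residue q = r := by
  rw [residue_eq_of_arr17 h]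

theorem exists_isLeafSink_component_iff (r : ℤ) :
    (∃ v, IsLeafSink (Subrel arr17 (residue · = r)) v) ↔ r = 0 ∨ r = 1 := by
  rw [(isNeighborhoodEmbedding_subtypeVal (residue_eq_iff_of_arr17 r)).exists_isLeafSink_iff]
  simp only [Subtype.range_coe_subtype, mem_ofPred_eq, isLeafSink_arr17_iff, and_or_left,
    exists_or, exists_eq_right]
  norm_num [residue, eq_comm]

theorem exists_isForkFedLeafSink_component_iff (r : ℤ) :
    (∃ v, IsForkFedLeafSink (Subrel arr17 (residue · = r)) v) ↔ r = 1 := by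
  rw [(isNeighborhoodEmbedding_subtypeVal (residue_eq_iff_of_arr17 r)).exists_isForkFedLeafSink_iff]
  simp only [Subtype.range_coe_subtype, mem_ofPred_eq, isForkFedLeafSink_arr17_iff,
    exists_eq_right]
  norm_num [residue, eq_comm]

/-- `Δ` has exactly three connected components, with vertex sets
`C_r = {(m,n) : m − n ≡ r (mod 3)}`, `r = 0, 1, 2`, and the full subquivers on
`C_0, C_1, C_2` are pairwise non-isomorphic. -/
theorem stmt_17 :
    (∀ p q : ℕ × ℕ,
        Relation.ReflTransGen (fun u v => arr17 u v ∨ arr17 v u) p q ↔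
          ((p.1 : ℤ) - p.2) % 3 = ((q.1 : ℤ) - q.2) % 3) ∧
      (∀ r r' : ℤ, 0 ≤ r → r < 3 → 0 ≤ r' → r' < 3 → r ≠ r' →
        ¬∃ F : {p : ℕ × ℕ // ((p.1 : ℤ) - p.2) % 3 = r} ≃
            {p : ℕ × ℕ // ((p.1 : ℤ) - p.2) % 3 = r'},
          ∀ u v, arr17 u.1 v.1 ↔ arr17 (F u).1 (F v).1) := by
  refine ⟨reflTransGen_symmGen_arr17_iff, ?_⟩
  rintro r r' hr₀ hr₃ hr₀' hr₃' hne ⟨F, hF⟩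
  let e : Subrel arr17 (residue · = r) ≃r Subrel arr17 (residue · = r') := ⟨F, (hF _ _).symm⟩
  have hleaf := e.exists_isLeafSink_iff
  have hfork := e.exists_isForkFedLeafSink_iff
  rw [exists_isLeafSink_component_iff, exists_isLeafSink_component_iff] at hleaf
  rw [exists_isForkFedLeafSink_component_iff, exists_isForkFedLeafSink_component_iff] at hfork
  omega
end
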